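/- For natural numbers a, b, c, d with b ≥ a+d, a ≥ c, the sum over k from 0 to a of C(a,k)·C(b,d+k)·C(k,c)·C(d+k,d)·H(k)·H(b-d-k) equals C(a+b-c-d, a)·C(a,c)·C(b,d)·(H2(b-d) - H2(a+b-c-d) + (H(b-d) - H(a+b-c-d) + H(b-d-c))·(H(b-d) - H(a+b-c-d) + H(a))). -/

import Mathlib

/-!
Since `C(a,k) C(k,c) = C(a,c) C(a-c,k-c)` and `C(b,d+k) C(d+k,d) = C(b,d) C(b-d,k)`, the sum
reduces to `S(A,c) = ∑ⱼ C(A,j) C(B,c+j) H(c+j) H(B-c-j)` with `A = a-c`, `B = b-d`. Pascal's rule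
on `C(A+1,j)` gives `S(A+1,c) = S(A,c) + S(A,c+1)`, and the closed form satisfies the same
recursion, a rational identity once `H` and `H2` are unfolded one step; both agree at `A = 0`.
-/

noncomputable def H (m : ℕ) : ℚ := ∑ j ∈ Finset.range m, (1 : ℚ) / (j + 1)

noncomputable def H2 (m : ℕ) : ℚ := ∑ j ∈ Finset.range m, (1 : ℚ) / ((j : ℚ) + 1) ^ 2

open Finset

lemma H_succ (n : ℕ) : H (n + 1) = H n + 1 / ((n : ℚ) + 1) := by
  simp [H, sum_range_succ]

lemma H2_succ (n : ℕ) : H2 (n + 1) = H2 n + 1 / ((n : ℚ) + 1) ^ 2 := by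
  simp [H2, sum_range_succ]

lemma Nat.choose_add_mul_choose_add (n m k : ℕ) :
    (n + m).choose (n + k) * (n + k).choose n = (n + m).choose n * m.choose k := by
  simpa using Nat.choose_mul (n := n + m) (Nat.le_add_right n k)

/-- With `Y * m = X * n` the weights split `X + Y` as `X = (X + Y) m / (m + n)` and
`Y = (X + Y) n / (m + n)`, and `(1/n - 1/(m+n)) * (1/m - 1/(m+n)) = 1/(m+n)^2` absorbs the
correction to `q`. -/
lemma pascal_harmonic_identity {K : Type*} [Field K] {q P Q X Y m n : K}
    (hm : m ≠ 0) (hn : n ≠ 0) (hmn : m + n ≠ 0) (hXY : Y * m = X * n) :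
    (X + Y) * (q - 1 / (m + n) ^ 2 + (P + 1 / n - 1 / (m + n)) * (Q + 1 / m - 1 / (m + n))) =
      X * (q + (P + 1 / n) * Q) + Y * (q + P * (Q + 1 / m)) := by
  field_simp
  linear_combination (m + n) * (Q * m - P * n) * hXY

noncomputable def harmonicProductClosedForm (B A c : ℕ) : ℚ :=
  (A + B).choose (A + c) *
    (H2 B - H2 (A + B) + (H B - H (A + B) + H (B - c)) * (H B - H (A + B) + H (A + c)))

lemma harmonicProductClosedForm_succ {A B c : ℕ} (h : A + c < B) :
    harmonicProductClosedForm B (A + 1) c =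
      harmonicProductClosedForm B A c + harmonicProductClosedForm B A (c + 1) := by
  obtain ⟨r, rfl⟩ : ∃ r, B = c + r + 1 := ⟨B - c - 1, by omega⟩
  have hXY : ((A + (c + r + 1)).choose (A + c + 1) : ℚ) * ((A + c : ℕ) + 1) =
      (A + (c + r + 1)).choose (A + c) * ((r : ℚ) + 1) := by
    have := Nat.choose_succ_right_eq (A + (c + r + 1)) (A + c)
    rw [show A + (c + r + 1) - (A + c) = r + 1 by omega] at this
    exact_mod_cast this
  unfold harmonicProductClosedForm
  rw [show A + 1 + (c + r + 1) = A + (c + r + 1) + 1 by omega,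
    show A + 1 + c = A + c + 1 by omega, ← add_assoc A c 1,
    show c + r + 1 - c = r + 1 by omega, show c + r + 1 - (c + 1) = r by omega,
    Nat.choose_succ_succ', H_succ (A + (c + r + 1)), H2_succ (A + (c + r + 1)), H_succ r,
    H_succ (A + c)]
  push_cast at hXY ⊢
  linear_combination pascal_harmonic_identity (q := H2 (c + r + 1) - H2 (A + (c + r + 1)))
    (P := H (c + r + 1) - H (A + (c + r + 1)) + H r)
    (Q := H (c + r + 1) - H (A + (c + r + 1)) + H (A + c))
    (by positivity : (A : ℚ) + c + 1 ≠ 0) (by positivity : (r : ℚ) + 1 ≠ 0)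
    (by positivity) hXY

theorem sum_choose_mul_choose_mul_H_mul_H {A B c : ℕ} (h : A + c ≤ B) :
    ∑ j ∈ range (A + 1), (A.choose j : ℚ) * (B.choose (c + j) * H (c + j) * H (B - c - j)) =
      harmonicProductClosedForm B A c := by
  induction A generalizing c with
  | zero => simp [harmonicProductClosedForm]; ring
  | succ A ih =>
    rw [harmonicProductClosedForm_succ (by omega), ← ih (by omega), ← ih (by omega),
      sum_choose_succ_mul (fun j _ ↦ (B.choose (c + j) : ℚ) * H (c + j) * H (B - c - j))]
    congr 1
    refine sum_congr rfl fun j _ ↦ ?_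
    rw [show c + (j + 1) = c + 1 + j by omega, show B - c - (j + 1) = B - (c + 1) - j by omega]

theorem stmt_15 (a b c d : ℕ) (h1 : b ≥ a + d) (h2 : a ≥ c) :
    ∑ k ∈ Finset.range (a + 1),
      (a.choose k : ℚ) * b.choose (d + k) * k.choose c * (d + k).choose d * H k *
        H (b - d - k) =
    ((a + b - c - d).choose a : ℚ) * a.choose c * b.choose d *
      (H2 (b - d) - H2 (a + b - c - d) +
        (H (b - d) - H (a + b - c - d) + H (b - d - c)) *
        (H (b - d) - H (a + b - c - d) + H a)) := by
  obtain ⟨A, rfl⟩ : ∃ A, a = c + A := ⟨a - c, by omega⟩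
  obtain ⟨B, rfl⟩ : ∃ B, b = d + B := ⟨b - d, by omega⟩
  have hterm : ∀ j, ((c + A).choose (c + j) : ℚ) * (d + B).choose (d + (c + j)) *
      (c + j).choose c * (d + (c + j)).choose d * H (c + j) * H (d + B - d - (c + j)) =
      (c + A).choose c * (d + B).choose d *
        (A.choose j * (B.choose (c + j) * H (c + j) * H (B - c - j))) := fun j ↦ by
    have hA : ((c + A).choose (c + j) : ℚ) * (c + j).choose c = (c + A).choose c * A.choose j :=
      mod_cast Nat.choose_add_mul_choose_add c A j
    have hB : ((d + B).choose (d + (c + j)) : ℚ) * (d + (c + j)).choose d =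
        (d + B).choose d * B.choose (c + j) :=
      mod_cast Nat.choose_add_mul_choose_add d B (c + j)
    rw [show d + B - d - (c + j) = B - c - j by omega]
    calc _ = ((c + A).choose (c + j) * (c + j).choose c : ℚ) *
          ((d + B).choose (d + (c + j)) * (d + (c + j)).choose d) * H (c + j) * H (B - c - j) := by
          ring
      _ = _ := by rw [hA, hB]; ring
  rw [show c + A + 1 = c + (A + 1) by omega, sum_range_add,
    sum_eq_zero fun k hk ↦ by simp [Nat.choose_eq_zero_of_lt (mem_range.mp hk)], zero_add,
    sum_congr rfl fun j _ ↦ hterm j, ← mul_sum, sum_choose_mul_choose_mul_H_mul_H (by omega),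
    harmonicProductClosedForm, show c + A + (d + B) - c - d = A + B by omega,
    show d + B - d - c = B - c by omega, Nat.add_sub_cancel_left, add_comm A c]
  ring
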